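/- Let ξ = Σ_{k=1}^{N} (−1)^{p̄_k}. For every λ ∈ ℤ^N, every r ∈ ℤ/pℤ, and all 1 ≤ i < j ≤ N: (i, j) is an r-canceling pair for λ (with respect to the parity sequence p̄) if and only if (w₀(j), w₀(i)) is an (r − ξ)-canceling pair for s̃(λ) (with respect to the opposite parity sequence p̄′). -/

import Mathlib

/-!
Reversing the order and flipping every parity turns `ϑ′_{w₀ j}` into `-∑_{i<j} (−1)^{p̄_i + p̄_j}`,
so `r′_{w₀ j}(s̃ λ) = r_j(λ + ε_j) − ξ` and `r′_{w₀ j}(s̃ λ + ε_{w₀ j}) = r_j(λ) − ξ`. Hence the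
`(r − ξ)`-signature of `s̃ λ` for `p̄′` is the `r`-signature of `λ` read backwards with `+` and `−`
exchanged, and this reversal carries the canceling pair `(i, j)` to `(w₀ j, w₀ i)`.
-/

namespace Kujawa

open Finset

variable {n : ℕ}

/-- The sign `(−1)^{p̄ i}` attached to the parity sequence `pb`. -/
def sg (pb : Fin (n + 1) → ZMod 2) (i : Fin (n + 1)) : ℤ :=
  if pb i = 0 then 1 else -1

/-- `ϑ_j = ∑_{i > j} (−1)^{p̄_i + p̄_j}`. -/
def theta (pb : Fin (n + 1) → ZMod 2) (j : Fin (n + 1)) : ℤ :=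
  ∑ i ∈ Finset.Ioi j, sg pb i * sg pb j

/-- The standard basis vector `ε_i` of `X(T) = ℤ^N`. -/
def eps (i : Fin (n + 1)) : Fin (n + 1) → ℤ := fun j => if j = i then 1 else 0

/-- The `j`-th residue `r_j(λ) = (λ + ϑ, ε_j)`. -/
def res (pb : Fin (n + 1) → ZMod 2) (l : Fin (n + 1) → ℤ) (j : Fin (n + 1)) : ℤ :=
  sg pb j * (l j + theta pb j)

/-- `ρ = ϑ + ∑_{i : p̄_i = 0} ε_i`, coordinatewise. -/
def rho (pb : Fin (n + 1) → ZMod 2) (k : Fin (n + 1)) : ℤ :=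
  theta pb k + (if pb k = 0 then 1 else 0)

/-- `l(λ) = ∑ λ_i`. -/
def ell (l : Fin (n + 1) → ℤ) : ℤ := ∑ i, l i

/-- The central character value `Z_r(λ)`. -/
def Zint (pb : Fin (n + 1) → ZMod 2) (r : ℕ) (l : Fin (n + 1) → ℤ) : ℤ :=
  ∑ s ∈ Finset.Icc 1 r, (-1 : ℤ) ^ (s - 1) *
    ∑ K ∈ Finset.powersetCard s (Finset.univ : Finset (Fin (n + 1))),
      ∑ a ∈ Fintype.piFinset (fun _ : Fin (n + 1) => Finset.range (r + 2)),
        if (∑ k ∈ K, a k) = r - s + 1 ∧ (∀ k, k ∉ K → a k = 0) then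
          (∏ k ∈ K, sg pb k) * ∏ k ∈ K, res pb l k ^ a k
        else 0

/-- `A_r(λ) = #{i : r_i(λ+ε_i) ≡ r (mod p)}`. -/
def Acount (pb : Fin (n + 1) → ZMod 2) (p : ℕ) (r : ZMod p) (l : Fin (n + 1) → ℤ) : ℕ :=
  (Finset.univ.filter fun i : Fin (n + 1) => ((res pb (l + eps i) i : ℤ) : ZMod p) = r).card

/-- `B_r(λ) = #{i : r_i(λ) ≡ r (mod p)}`. -/
def Bcount (pb : Fin (n + 1) → ZMod 2) (p : ℕ) (r : ZMod p) (l : Fin (n + 1) → ℤ) : ℕ :=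
  (Finset.univ.filter fun i : Fin (n + 1) => ((res pb l i : ℤ) : ZMod p) = r).card

/-- For `p = 0`: `γ_a` is the basis element `single a 1` of the free module `ℤ →₀ ℤ`. -/
noncomputable def gamma0 (a : ℤ) : ℤ →₀ ℤ := Finsupp.single a 1

/-- `wt` for `p = 0`, with values in the free `ℤ`-module on basis `{γ_a : a ∈ ℤ}`. -/
noncomputable def wt0 (pb : Fin (n + 1) → ZMod 2) (l : Fin (n + 1) → ℤ) : ℤ →₀ ℤ :=
  ∑ i : Fin (n + 1), sg pb i • gamma0 (sg pb i * (l i + rho pb i))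

/-- `Λ_r ∈ P = ℤδ ⊕ ⊕_{r ∈ ℤ/pℤ} ℤΛ_r`. -/
def LamP (p : ℕ) (r : ZMod p) : ℤ × (ZMod p → ℤ) := (0, fun s => if s = r then 1 else 0)

/-- `δ ∈ P`. -/
def delP (p : ℕ) : ℤ × (ZMod p → ℤ) := (1, 0)

/-- `γ_a = Λ_{s mod p} − Λ_{(s−1) mod p} − d·δ`, where `a = p·d + s` with `1 ≤ s ≤ p`. -/
def gammaP (p : ℕ) (a : ℤ) : ℤ × (ZMod p → ℤ) :=
  LamP p (((a - 1) % (p : ℤ) + 1 : ℤ) : ZMod p) - LamP p (((a - 1) % (p : ℤ) : ℤ) : ZMod p) -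
    ((a - 1) / (p : ℤ)) • delP p

/-- `wt` for prime `p`. -/
def wtP (p : ℕ) (pb : Fin (n + 1) → ZMod 2) (l : Fin (n + 1) → ℤ) : ℤ × (ZMod p → ℤ) :=
  ∑ i : Fin (n + 1), sg pb i • gammaP p (sg pb i * (l i + rho pb i))

/-- Entry `i` of the `r`-signature of `λ`: `1` codes `+`, `-1` codes `−`, `0` codes `0`. -/
def sig (pb : Fin (n + 1) → ZMod 2) (p : ℕ) (r : ZMod p) (l : Fin (n + 1) → ℤ)
    (i : Fin (n + 1)) : ℤ :=
  if ((res pb (l + eps i) i : ℤ) : ZMod p) = r then 1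
  else if ((res pb l i : ℤ) : ZMod p) = r then -1
  else 0

/-- Number of `−`'s of the `r`-signature of `λ` in positions `[i..j]`. -/
noncomputable def nM (pb : Fin (n + 1) → ZMod 2) (p : ℕ) (r : ZMod p) (l : Fin (n + 1) → ℤ)
    (i j : Fin (n + 1)) : ℕ :=
  Set.ncard {k : Fin (n + 1) | k ∈ Finset.Icc i j ∧ sig pb p r l k = -1}

/-- Number of `+`'s of the `r`-signature of `λ` in positions `[i..j]`. -/
noncomputable def nP (pb : Fin (n + 1) → ZMod 2) (p : ℕ) (r : ZMod p) (l : Fin (n + 1) → ℤ)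
    (i j : Fin (n + 1)) : ℕ :=
  Set.ncard {k : Fin (n + 1) | k ∈ Finset.Icc i j ∧ sig pb p r l k = 1}

/-- `i` is the position of a `−` in the reduced `r`-signature of `λ` (i.e. `i` is
`r`-normal for `λ`): the `−` at `i` is never cancelled, which happens exactly when every
interval `[i..j]` contains strictly more `−`'s than `+`'s. -/
def RMinus (pb : Fin (n + 1) → ZMod 2) (p : ℕ) (r : ZMod p) (l : Fin (n + 1) → ℤ)
    (i : Fin (n + 1)) : Prop :=
  sig pb p r l i = -1 ∧ ∀ j : Fin (n + 1), i ≤ j → nP pb p r l i j < nM pb p r l i j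

/-- `i` is the position of a `+` in the reduced `r`-signature of `λ` (i.e. `i` is
`r`-conormal for `λ`). -/
def RPlus (pb : Fin (n + 1) → ZMod 2) (p : ℕ) (r : ZMod p) (l : Fin (n + 1) → ℤ)
    (i : Fin (n + 1)) : Prop :=
  sig pb p r l i = 1 ∧ ∀ j : Fin (n + 1), j ≤ i → nM pb p r l j i < nP pb p r l j i

/-- `i` is the position of the leftmost `−` in the reduced `r`-signature (`r`-good). -/
def RGood (pb : Fin (n + 1) → ZMod 2) (p : ℕ) (r : ZMod p) (l : Fin (n + 1) → ℤ)
    (i : Fin (n + 1)) : Prop :=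
  RMinus pb p r l i ∧ ∀ j : Fin (n + 1), j < i → ¬ RMinus pb p r l j

/-- `i` is the position of the rightmost `+` in the reduced `r`-signature (`r`-cogood). -/
def RCogood (pb : Fin (n + 1) → ZMod 2) (p : ℕ) (r : ZMod p) (l : Fin (n + 1) → ℤ)
    (i : Fin (n + 1)) : Prop :=
  RPlus pb p r l i ∧ ∀ j : Fin (n + 1), i < j → ¬ RPlus pb p r l j

open Classical in
/-- The crystal operator `ẽ*_r`, with `none` playing the role of `0`. -/
noncomputable def eStar (pb : Fin (n + 1) → ZMod 2) (p : ℕ) (r : ZMod p)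
    (l : Fin (n + 1) → ℤ) : Option (Fin (n + 1) → ℤ) :=
  if h : (Finset.univ.filter (RMinus pb p r l)).Nonempty then
    some (l - eps ((Finset.univ.filter (RMinus pb p r l)).min' h))
  else none

open Classical in
/-- The crystal operator `f̃*_r`, with `none` playing the role of `0`. -/
noncomputable def fStar (pb : Fin (n + 1) → ZMod 2) (p : ℕ) (r : ZMod p)
    (l : Fin (n + 1) → ℤ) : Option (Fin (n + 1) → ℤ) :=
  if h : (Finset.univ.filter (RPlus pb p r l)).Nonempty then
    some (l + eps ((Finset.univ.filter (RPlus pb p r l)).max' h))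
  else none

/-- `A ↓ B`: there is an injection `θ : A → B` with `θ a ≤ a` for all `a ∈ A`. -/
def Down (A B : Finset (Fin (n + 1))) : Prop :=
  ∃ θ : Fin (n + 1) → Fin (n + 1), Set.InjOn θ ↑A ∧ ∀ a ∈ A, θ a ∈ B ∧ θ a ≤ a

/-- `C_{i,j}(λ) = {h ∈ (i..j) : c_{i,h}(λ) ≡ 0 (mod p)}`. -/
def Cset (pb : Fin (n + 1) → ZMod 2) (p : ℕ) (l : Fin (n + 1) → ℤ) (i j : Fin (n + 1)) :
    Finset (Fin (n + 1)) :=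
  (Finset.Ioo i j).filter fun h => ((res pb l i - res pb l h : ℤ) : ZMod p) = 0

/-- `B_{i,j}(λ) = {h ∈ [i..j) : b_{i,h}(λ) ≡ 0 (mod p)}`. -/
def Bset (pb : Fin (n + 1) → ZMod 2) (p : ℕ) (l : Fin (n + 1) → ℤ) (i j : Fin (n + 1)) :
    Finset (Fin (n + 1)) :=
  (Finset.Ico i j).filter fun h =>
    ((res pb l i - res pb (l + eps (h + 1)) (h + 1) : ℤ) : ZMod p) = 0

/-- The opposite parity sequence `p̄′_k = p̄_{w₀ k} + 1̄`, where `w₀ k = N + 1 − k`. -/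
def pbRev (pb : Fin (n + 1) → ZMod 2) : Fin (n + 1) → ZMod 2 := fun k => pb k.rev + 1

/-- `s̃ : ℤ^N → ℤ^N`, `(s̃ λ)_{w₀ i} = −λ_i`. -/
def stilde (l : Fin (n + 1) → ℤ) : Fin (n + 1) → ℤ := fun k => -l k.rev

/-- `(i, j)` is an `r`-canceling pair for `λ` (for `i < j`). -/
def CPair (pb : Fin (n + 1) → ZMod 2) (p : ℕ) (r : ZMod p) (l : Fin (n + 1) → ℤ)
    (i j : Fin (n + 1)) : Prop :=
  sig pb p r l i = -1 ∧ sig pb p r l j = 1 ∧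
    ∀ k : Fin (n + 1), i < k → k < j → sig pb p r l k = 0

/-- `(i i+1)·λ`: interchange coordinates `i` and `i+1`. -/
def swapL (i : Fin (n + 1)) (l : Fin (n + 1) → ℤ) : Fin (n + 1) → ℤ :=
  fun k => if k = i then l (i + 1) else if k = i + 1 then l i else l k

/-- The parity sequence obtained from `pb` by interchanging entries `i` and `i+1`. -/
def pbSwap (pb : Fin (n + 1) → ZMod 2) (i : Fin (n + 1)) : Fin (n + 1) → ZMod 2 :=
  fun k => if k = i then pb (i + 1) else if k = i + 1 then pb i else pb k

/-- The odd reflection `s_i` on `X(T)`. -/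
def sI (pb : Fin (n + 1) → ZMod 2) (p : ℕ) (i : Fin (n + 1)) (l : Fin (n + 1) → ℤ) :
    Fin (n + 1) → ℤ :=
  if ((sg pb i * l i - sg pb (i + 1) * l (i + 1) : ℤ) : ZMod p) = 0 then swapL i l
  else swapL i l + eps i - eps (i + 1)

lemma sg_mul_self (pb : Fin (n + 1) → ZMod 2) (i : Fin (n + 1)) : sg pb i * sg pb i = 1 := by
  unfold sg; split <;> norm_num

lemma sg_pbRev (pb : Fin (n + 1) → ZMod 2) (k : Fin (n + 1)) :
    sg (pbRev pb) k = -sg pb k.rev := by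
  unfold sg pbRev
  rcases (by decide : ∀ x : ZMod 2, x = 0 ∨ x = 1) (pb k.rev) with h | h <;> simp [h]
  decide

lemma sum_sg_eq_sum_Iio_add_sum_Ioi (pb : Fin (n + 1) → ZMod 2) (j : Fin (n + 1)) :
    ∑ k, sg pb k = ∑ i ∈ Iio j, sg pb i + sg pb j + ∑ i ∈ Ioi j, sg pb i := by
  rw [add_assoc, add_sum_Ioi_eq_sum_Ici, ← sum_filter_add_sum_filter_not univ (· < j)]
  simp only [not_lt, filter_gt_eq_Iio, filter_le_eq_Ici]

lemma res_add_eps (pb : Fin (n + 1) → ZMod 2) (l : Fin (n + 1) → ℤ) (j : Fin (n + 1)) :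
    res pb (l + eps j) j = res pb l j + sg pb j := by
  simp only [res, eps, Pi.add_apply, if_true]
  ring

lemma res_eq_sum_Ioi (pb : Fin (n + 1) → ZMod 2) (l : Fin (n + 1) → ℤ) (j : Fin (n + 1)) :
    res pb l j = sg pb j * l j + ∑ i ∈ Ioi j, sg pb i := by
  simp only [res, theta, ← sum_mul]
  linear_combination (∑ i ∈ Ioi j, sg pb i) * sg_mul_self pb j

lemma res_pbRev_stilde_rev_eq_sum_Iio (pb : Fin (n + 1) → ZMod 2) (l : Fin (n + 1) → ℤ)
    (j : Fin (n + 1)) :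
    res (pbRev pb) (stilde l) j.rev = sg pb j * l j - ∑ i ∈ Iio j, sg pb i := by
  have htheta : theta (pbRev pb) j.rev = (∑ i ∈ Iio j, sg pb i) * sg pb j := by
    rw [theta, ← Fin.map_revPerm_Iio, sum_map, sum_mul]
    simp [sg_pbRev]
  simp only [res, stilde, htheta, sg_pbRev, Fin.rev_rev]
  linear_combination (-∑ i ∈ Iio j, sg pb i) * sg_mul_self pb j

lemma res_pbRev_stilde_rev (pb : Fin (n + 1) → ZMod 2) (l : Fin (n + 1) → ℤ) (j : Fin (n + 1)) :
    res (pbRev pb) (stilde l) j.rev = res pb (l + eps j) j - ∑ k, sg pb k := by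
  rw [res_pbRev_stilde_rev_eq_sum_Iio, res_add_eps, res_eq_sum_Ioi,
    sum_sg_eq_sum_Iio_add_sum_Ioi pb j]
  ring

lemma res_pbRev_add_eps_stilde_rev (pb : Fin (n + 1) → ZMod 2) (l : Fin (n + 1) → ℤ)
    (j : Fin (n + 1)) :
    res (pbRev pb) (stilde l + eps j.rev) j.rev = res pb l j - ∑ k, sg pb k := by
  rw [res_add_eps, res_pbRev_stilde_rev, res_add_eps, sg_pbRev, Fin.rev_rev]
  ring

lemma sig_pbRev_stilde {p : ℕ} (hp : p ≠ 1) (pb : Fin (n + 1) → ZMod 2)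
    (l : Fin (n + 1) → ℤ) (r : ZMod p) (j : Fin (n + 1)) :
    sig (pbRev pb) p (r - ((∑ k, sg pb k : ℤ) : ZMod p)) (stilde l) j.rev = -sig pb p r l j := by
  have : Nontrivial (ZMod p) := ZMod.nontrivial_iff.mpr hp
  -- the two residues differ by `±1`, so at most one of them is `≡ r`
  have hne : ((res pb l j : ℤ) : ZMod p) = r → ((res pb (l + eps j) j : ℤ) : ZMod p) ≠ r := by
    intro h1 h2
    rw [res_add_eps, Int.cast_add, h1, add_eq_left] at h2
    unfold sg at h2
    split at h2 <;> simp at h2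
  simp only [sig, res_pbRev_stilde_rev, res_pbRev_add_eps_stilde_rev, Int.cast_sub, sub_left_inj]
  by_cases h1 : ((res pb l j : ℤ) : ZMod p) = r
  · simp [h1, hne h1]
  · by_cases h2 : ((res pb (l + eps j) j : ℤ) : ZMod p) = r <;> simp [h1, h2]

theorem statement12_general (p : ℕ) (hp : p = 0 ∨ p.Prime) (pb : Fin (n + 1) → ZMod 2)
    (lam : Fin (n + 1) → ℤ) (r : ZMod p) (i j : Fin (n + 1)) :
    CPair pb p r lam i j ↔
      CPair (pbRev pb) p (r - ((∑ k : Fin (n + 1), sg pb k : ℤ) : ZMod p)) (stilde lam)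
        j.rev i.rev := by
  have hp1 : p ≠ 1 := by
    rcases hp with rfl | hp
    · exact zero_ne_one
    · exact hp.ne_one
  have hsig := sig_pbRev_stilde hp1 pb lam r
  unfold CPair
  conv_rhs => rw [Fin.rev_surjective.forall]
  simp only [hsig, Fin.rev_lt_rev, neg_eq_iff_eq_neg, neg_neg]
  constructor
  · exact fun ⟨hi, hj, hk⟩ => ⟨hj, hi, fun k hjk hki => hk k hki hjk⟩
  · exact fun ⟨hj, hi, hk⟩ => ⟨hi, hj, fun k hik hkj => hk k hkj hik⟩

/-- with `ξ = Σ_k (−1)^{p̄_k}`, `(i, j)` is an `r`-canceling pair for `λ`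
iff `(w₀ j, w₀ i)` is an `(r − ξ)`-canceling pair for `s̃ λ` w.r.t. `p̄′`. -/
theorem statement12 (p : ℕ) (hp : p = 0 ∨ p.Prime) (pb : Fin (n + 1) → ZMod 2)
    (lam : Fin (n + 1) → ℤ) (r : ZMod p) (i j : Fin (n + 1)) (hij : i < j) :
    CPair pb p r lam i j ↔
      CPair (pbRev pb) p (r - ((∑ k : Fin (n + 1), sg pb k : ℤ) : ZMod p)) (stilde lam)
        j.rev i.rev :=
  statement12_general p hp pb lam r i j

end Kujawa
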